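/- arXiv:2510.26301 — 3 statements merged into one kernel-verified Lean document; each statement's English description precedes it below -/
import Mathlib

section
/- Let M ∈ ℝ^{d×d} be symmetric positive definite with eigenvalues λ₁(M) ≤ ... ≤ λ_d(M), and suppose there exists an integer s ∈ {1,...,d−1} with λ_{s+1}(M) ≥ λ₁(M) + 1. Perform s greedy rank-one updates: M⁽⁰⁾ = M, z_t = argmax_{‖z‖≤1} zᵀ(M⁽ᵗ⁻¹⁾)⁻¹z, M⁽ᵗ⁾ = M⁽ᵗ⁻¹⁾ + z_t z_tᵀ for t = 1,...,s. Then λ_min(M⁽ˢ⁾) ≥ λ_min(M) + 1. -/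
/-!
Put `c = λ₁(M) + 1`. The eigenvectors of `M` with eigenvalue at least `c` form an orthonormal
family of size at least `d - s`, and each greedy step enlarges such a family by one. Indeed, if
`μ` is the smallest eigenvalue of `A`, then `A⁻¹ ≤ μ⁻¹`, and a maximizer `z` of `w ↦ wᵀA⁻¹w` over
the unit ball attains `μ⁻¹`; so `zᵀ(μ⁻¹ - A⁻¹)z = 0`, and `z` is a unit eigenvector of `A` for
`μ`. If `μ ≥ c`, then already `A + zzᵀ ≥ c`. Otherwise `z` is orthogonal to the family, whose
members stay eigenvectors of `A + zzᵀ`, and `z` joins them with eigenvalue `μ + 1 ≥ λ₁(M) + 1`,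
since rank-one updates only increase the quadratic form. After `s` steps the family is an
orthonormal basis, so `λ_min(M⁽ˢ⁾) ≥ c`.
-/

open Matrix

/-- The smallest eigenvalue of a symmetric matrix, as the infimum of the Rayleigh
quotient over the Euclidean unit sphere. -/
noncomputable def lamMin {d : ℕ} (A : Matrix (Fin d) (Fin d) ℝ) : ℝ :=
  sInf { r : ℝ | ∃ v : Fin d → ℝ, v ⬝ᵥ v = 1 ∧ r = v ⬝ᵥ A.mulVec v }

open Finset

namespace Matrix

variable {n : Type*} [Fintype n]

section Symmetric

variable {A : Matrix n n ℝ}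

theorem dotProduct_mulVec_add_vecMulVec_self (z v : n → ℝ) :
    v ⬝ᵥ (A + vecMulVec z z) *ᵥ v = v ⬝ᵥ A *ᵥ v + (z ⬝ᵥ v) ^ 2 := by
  rw [add_mulVec, dotProduct_add, vecMulVec_mulVec, op_smul_eq_smul, dotProduct_smul,
    dotProduct_comm v z, smul_eq_mul, sq]

theorem dotProduct_mulVec_monotone_of_add_vecMulVec {A : ℕ → Matrix n n ℝ} {z : ℕ → n → ℝ}
    (hA : ∀ t, A (t + 1) = A t + vecMulVec (z (t + 1)) (z (t + 1))) (v : n → ℝ) :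
    Monotone fun t => v ⬝ᵥ A t *ᵥ v :=
  monotone_nat_of_le_succ fun t => by
    simp only [hA, dotProduct_mulVec_add_vecMulVec_self]
    exact le_add_of_nonneg_right (sq_nonneg _)

theorem PosDef.add_vecMulVec_self (hA : A.PosDef) (z : n → ℝ) : (A + vecMulVec z z).PosDef :=
  hA.add_posSemidef (by simpa using posSemidef_vecMulVec_self_star z)

theorem IsHermitian.dotProduct_mulVec_comm (hA : A.IsHermitian) (u v : n → ℝ) :
    u ⬝ᵥ A *ᵥ v = A *ᵥ u ⬝ᵥ v := by
  rw [dotProduct_mulVec, ← mulVec_transpose, ← conjTranspose_eq_transpose_of_trivial, hA]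

theorem IsHermitian.dotProduct_eq_zero_of_eigen_ne (hA : A.IsHermitian) {u v : n → ℝ} {a b : ℝ}
    (hu : A *ᵥ u = a • u) (hv : A *ᵥ v = b • v) (hab : a ≠ b) : u ⬝ᵥ v = 0 := by
  have h := hA.dotProduct_mulVec_comm u v
  rw [hu, hv, dotProduct_smul, smul_dotProduct, smul_eq_mul, smul_eq_mul] at h
  exact (mul_eq_mul_right_iff.mp h.symm).resolve_left hab

end Symmetric

variable [DecidableEq n]

section CommRing

variable {R : Type*} [CommRing R]

theorem sum_dotProduct_smul_of_orthonormal {p : n → n → R}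
    (hp : ∀ i j, p i ⬝ᵥ p j = if i = j then 1 else 0) (v : n → R) :
    ∑ i, (p i ⬝ᵥ v) • p i = v := by
  have hrows : of p * (of p)ᵀ = 1 := by
    ext i j
    simpa [mul_apply, dotProduct, one_apply] using hp i j
  calc ∑ i, (p i ⬝ᵥ v) • p i = (of p)ᵀ *ᵥ (of p *ᵥ v) := by
        rw [mulVec_transpose, vecMul_eq_sum]; rfl
    _ = v := by rw [mulVec_mulVec, mul_eq_one_comm.mp hrows, one_mulVec]

theorem dotProduct_mulVec_eq_sum_of_orthonormal_eigen {A : Matrix n n R} {ρ : n → R}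
    {p : n → n → R} (heig : ∀ i, A *ᵥ p i = ρ i • p i)
    (hp : ∀ i j, p i ⬝ᵥ p j = if i = j then 1 else 0) (v : n → R) :
    v ⬝ᵥ A *ᵥ v = ∑ i, ρ i * (p i ⬝ᵥ v) ^ 2 := by
  calc v ⬝ᵥ A *ᵥ v = v ⬝ᵥ A *ᵥ ∑ i, (p i ⬝ᵥ v) • p i := by
        rw [sum_dotProduct_smul_of_orthonormal hp]
    _ = ∑ i, ρ i * (p i ⬝ᵥ v) ^ 2 := by
        rw [mulVec_sum, dotProduct_sum]
        refine sum_congr rfl fun i _ => ?_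
        rw [mulVec_smul, heig, dotProduct_smul, dotProduct_smul, dotProduct_comm v, smul_eq_mul,
          smul_eq_mul]
        ring

theorem dotProduct_update_of_orthonormal {F : Finset n} {e : n → n → R}
    (he : ∀ i ∈ F, ∀ j ∈ F, e i ⬝ᵥ e j = if i = j then 1 else 0) {k : n} (hk : k ∉ F)
    {z : n → R} (hz : z ⬝ᵥ z = 1) (hze : ∀ i ∈ F, z ⬝ᵥ e i = 0) :
    ∀ i ∈ insert k F, ∀ j ∈ insert k F,
      Function.update e k z i ⬝ᵥ Function.update e k z j = if i = j then 1 else 0 := by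
  have hne : ∀ i ∈ F, i ≠ k := fun i hi h => hk (h ▸ hi)
  simp only [mem_insert, forall_eq_or_imp]
  refine ⟨⟨by simp [hz], fun j hj => ?_⟩, fun i hi => ⟨?_, fun j hj => ?_⟩⟩
  · simp [hne j hj, (hne j hj).symm, hze j hj]
  · simp [hne i hi, hze i hi, dotProduct_comm]
  · simp [hne i hi, hne j hj, he i hi j hj]

end CommRing

theorem inv_mulVec_eq_inv_smul_iff {K : Type*} [Field K] {B : Matrix n n K} (hB : IsUnit B.det)
    {a : K} (ha : a ≠ 0) {v : n → K} : B⁻¹ *ᵥ v = a⁻¹ • v ↔ B *ᵥ v = a • v := by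
  have hBB : ∀ w, B *ᵥ B⁻¹ *ᵥ w = w := fun w => by
    rw [mulVec_mulVec, mul_nonsing_inv B hB, one_mulVec]
  have hBB' : ∀ w, B⁻¹ *ᵥ B *ᵥ w = w := fun w => by
    rw [mulVec_mulVec, nonsing_inv_mul B hB, one_mulVec]
  constructor
  · intro h
    calc B *ᵥ v = a • B *ᵥ a⁻¹ • v := by rw [mulVec_smul, smul_smul, mul_inv_cancel₀ ha, one_smul]
      _ = a • v := by rw [← h, hBB]
  · intro h
    calc B⁻¹ *ᵥ v = a⁻¹ • B⁻¹ *ᵥ a • v := by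
          rw [mulVec_smul, smul_smul, inv_mul_cancel₀ ha, one_smul]
      _ = a⁻¹ • v := by rw [← h, hBB']

variable {A : Matrix n n ℝ}

theorem mul_dotProduct_self_le_of_orthonormal_eigen {ρ : n → ℝ} {p : n → n → ℝ}
    (heig : ∀ i, A *ᵥ p i = ρ i • p i) (hp : ∀ i j, p i ⬝ᵥ p j = if i = j then 1 else 0)
    {b : ℝ} (hb : ∀ i, b ≤ ρ i) (v : n → ℝ) : b * (v ⬝ᵥ v) ≤ v ⬝ᵥ A *ᵥ v := by
  have hnorm := dotProduct_mulVec_eq_sum_of_orthonormal_eigen (A := 1) (ρ := 1)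
    (fun i => by simp) hp v
  rw [one_mulVec] at hnorm
  rw [hnorm, dotProduct_mulVec_eq_sum_of_orthonormal_eigen heig hp, mul_sum]
  exact sum_le_sum fun i _ => by simpa using mul_le_mul_of_nonneg_right (hb i) (sq_nonneg _)

namespace IsHermitian

theorem exists_orthonormal_eigen (hA : A.IsHermitian) :
    ∃ (μ : n → ℝ) (p : n → n → ℝ), (∀ i, A *ᵥ p i = μ i • p i) ∧
      ∀ i j, p i ⬝ᵥ p j = if i = j then 1 else 0 := by
  refine ⟨hA.eigenvalues, fun i => hA.eigenvectorBasis i, hA.mulVec_eigenvectorBasis,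
    fun i j => ?_⟩
  simpa [EuclideanSpace.inner_eq_star_dotProduct, dotProduct_comm] using
    orthonormal_iff_ite.mp hA.eigenvectorBasis.orthonormal i j

theorem exists_min_eigen [Nonempty n] (hA : A.IsHermitian) :
    ∃ (μ : ℝ) (u : n → ℝ), A *ᵥ u = μ • u ∧ u ⬝ᵥ u = 1 ∧
      ∀ v, μ * (v ⬝ᵥ v) ≤ v ⬝ᵥ A *ᵥ v := by
  obtain ⟨μ, p, heig, hp⟩ := hA.exists_orthonormal_eigen
  obtain ⟨j, -, hj⟩ := exists_min_image univ μ univ_nonempty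
  exact ⟨μ j, p j, heig j, by simpa using hp j j,
    mul_dotProduct_self_le_of_orthonormal_eigen heig hp fun i => hj i (mem_univ i)⟩

end IsHermitian

namespace PosDef

theorem dotProduct_inv_mulVec_le (hA : A.PosDef) {μ : ℝ} (hμ : 0 < μ)
    (hlow : ∀ v, μ * (v ⬝ᵥ v) ≤ v ⬝ᵥ A *ᵥ v) (v : n → ℝ) :
    v ⬝ᵥ A⁻¹ *ᵥ v ≤ μ⁻¹ * (v ⬝ᵥ v) := by
  set w := A⁻¹ *ᵥ v
  have hw : A *ᵥ w = v := by
    rw [mulVec_mulVec, mul_nonsing_inv A ((isUnit_iff_isUnit_det A).mp hA.isUnit), one_mulVec]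
  have hwv : μ * (w ⬝ᵥ w) ≤ w ⬝ᵥ v := hw ▸ hlow w
  -- together with `hwv`, this gives `μ (w ⬝ v) ≤ v ⬝ v`
  have hsq : 0 ≤ (μ • w - v) ⬝ᵥ (μ • w - v) := dotProduct_self_star_nonneg _
  simp only [sub_dotProduct, dotProduct_sub, smul_dotProduct, dotProduct_smul, smul_eq_mul,
    dotProduct_comm v w] at hsq
  rw [dotProduct_comm, le_inv_mul_iff₀ hμ]
  nlinarith

theorem exists_min_eigen_of_maximizes_inv [Nonempty n] (hA : A.PosDef) {z : n → ℝ}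
    (hz : z ⬝ᵥ z ≤ 1) (hmax : ∀ w, w ⬝ᵥ w ≤ 1 → w ⬝ᵥ A⁻¹ *ᵥ w ≤ z ⬝ᵥ A⁻¹ *ᵥ z) :
    ∃ μ, A *ᵥ z = μ • z ∧ z ⬝ᵥ z = 1 ∧ ∀ v, μ * (v ⬝ᵥ v) ≤ v ⬝ᵥ A *ᵥ v := by
  have hdet : IsUnit A.det := (isUnit_iff_isUnit_det A).mp hA.isUnit
  obtain ⟨μ, u, hu, huu, hμ⟩ := hA.isHermitian.exists_min_eigen
  have hμpos : 0 < μ := by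
    have := hA.dotProduct_mulVec_pos (x := u) (by rintro rfl; simp at huu)
    rwa [star_trivial, hu, dotProduct_smul, huu, smul_eq_mul, mul_one] at this
  have hupper := hA.dotProduct_inv_mulVec_le hμpos hμ
  have hlower : μ⁻¹ ≤ z ⬝ᵥ A⁻¹ *ᵥ z := by
    have := hmax u huu.le
    rwa [(inv_mulVec_eq_inv_smul_iff hdet hμpos.ne').mpr hu, dotProduct_smul, huu, smul_eq_mul,
      mul_one] at this
  have hzz : z ⬝ᵥ z = 1 := by
    have := hupper z
    have : 0 < μ⁻¹ := inv_pos.mpr hμpos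
    nlinarith
  have hB : (μ⁻¹ • 1 - A⁻¹).PosSemidef := by
    refine posSemidef_iff_dotProduct_mulVec.mpr ⟨?_, fun x => ?_⟩
    · exact (isHermitian_one.smul (IsSelfAdjoint.all _)).sub hA.isHermitian.inv
    · simpa [sub_mulVec, smul_mulVec] using hupper x
  have hBz : (μ⁻¹ • 1 - A⁻¹) *ᵥ z = 0 := by
    refine (hB.dotProduct_mulVec_zero_iff z).mp ?_
    have := hupper z
    rw [hzz, mul_one] at this
    rw [star_trivial, sub_mulVec, dotProduct_sub, smul_mulVec, one_mulVec, dotProduct_smul, hzz,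
      smul_eq_mul, mul_one, sub_eq_zero]
    linarith
  refine ⟨μ, (inv_mulVec_eq_inv_smul_iff hdet hμpos.ne').mp ?_, hzz, hμ⟩
  rw [sub_mulVec, sub_eq_zero] at hBz
  simpa [smul_mulVec] using hBz.symm

end PosDef

def HasOrthonormalEigenvectorsGE (A : Matrix n n ℝ) (c : ℝ) (k : ℕ) : Prop :=
  ∃ (F : Finset n) (e : n → n → ℝ), k ≤ #F ∧ (∀ i ∈ F, ∃ ν, c ≤ ν ∧ A *ᵥ e i = ν • e i) ∧
    ∀ i ∈ F, ∀ j ∈ F, e i ⬝ᵥ e j = if i = j then 1 else 0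

theorem hasOrthonormalEigenvectorsGE_card_of_forall_le (hA : A.IsHermitian) {c : ℝ}
    (h : ∀ v, c * (v ⬝ᵥ v) ≤ v ⬝ᵥ A *ᵥ v) :
    A.HasOrthonormalEigenvectorsGE c (Fintype.card n) := by
  obtain ⟨μ, p, heig, hp⟩ := hA.exists_orthonormal_eigen
  refine ⟨univ, p, card_univ.ge, fun i _ => ⟨μ i, ?_, heig i⟩, fun i _ j _ => hp i j⟩
  simpa [heig, hp] using h (p i)

theorem hasOrthonormalEigenvectorsGE_of_monotone {d : ℕ} {M : Matrix (Fin d) (Fin d) ℝ}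
    {lam : Fin d → ℝ} {q : Fin d → Fin d → ℝ} (hmono : Monotone lam)
    (heig : ∀ i, M *ᵥ q i = lam i • q i) (horth : ∀ i j, q i ⬝ᵥ q j = if i = j then 1 else 0)
    {c : ℝ} {k : Fin d} (hc : c ≤ lam k) : M.HasOrthonormalEigenvectorsGE c (d - k) :=
  ⟨Ici k, q, by rw [Fin.card_Ici], fun i hi => ⟨lam i, hc.trans (hmono (mem_Ici.mp hi)), heig i⟩,
    fun i _ j _ => horth i j⟩

namespace HasOrthonormalEigenvectorsGE

variable {c : ℝ} {k : ℕ}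

theorem mono (h : A.HasOrthonormalEigenvectorsGE c k) {k' : ℕ} (hk : k' ≤ k) :
    A.HasOrthonormalEigenvectorsGE c k' :=
  let ⟨F, e, hF, heig, he⟩ := h
  ⟨F, e, hk.trans hF, heig, he⟩

theorem mul_dotProduct_self_le (h : A.HasOrthonormalEigenvectorsGE c (Fintype.card n))
    (v : n → ℝ) : c * (v ⬝ᵥ v) ≤ v ⬝ᵥ A *ᵥ v := by
  obtain ⟨F, e, hF, heig, he⟩ := h
  obtain rfl : F = univ := eq_univ_of_card F (le_antisymm (card_le_univ F) hF)
  choose ν hν heigν using fun i => heig i (mem_univ i)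
  exact mul_dotProduct_self_le_of_orthonormal_eigen heigν
    (fun i j => he i (mem_univ i) j (mem_univ j)) hν v

theorem add_vecMulVec_of_eigen (hA : A.IsHermitian) (h : A.HasOrthonormalEigenvectorsGE c k)
    {z : n → ℝ} {μ : ℝ} (hz : A *ᵥ z = μ • z) (hzz : z ⬝ᵥ z = 1) (hμc : μ < c)
    (hcμ : c ≤ μ + 1) : (A + vecMulVec z z).HasOrthonormalEigenvectorsGE c (k + 1) := by
  obtain ⟨F, e, hF, heig, he⟩ := h
  have hze : ∀ i ∈ F, z ⬝ᵥ e i = 0 := fun i hi => by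
    obtain ⟨ν, hν, hei⟩ := heig i hi
    exact hA.dotProduct_eq_zero_of_eigen_ne hz hei (hμc.trans_le hν).ne
  obtain ⟨j, hj⟩ : ∃ j, j ∉ F := by
    by_contra! hall
    have hfull : A.HasOrthonormalEigenvectorsGE c (Fintype.card n) :=
      ⟨F, e, by rw [eq_univ_of_forall hall, card_univ], heig, he⟩
    have := hfull.mul_dotProduct_self_le z
    rw [hz, dotProduct_smul, hzz, smul_eq_mul, mul_one, mul_one] at this
    linarith
  refine ⟨insert j F, Function.update e j z, by rw [card_insert_of_notMem hj]; omega, ?_,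
    dotProduct_update_of_orthonormal he hj hzz hze⟩
  simp only [mem_insert, forall_eq_or_imp, Function.update_self]
  refine ⟨⟨μ + 1, hcμ, ?_⟩, fun i hi => ?_⟩
  · rw [add_mulVec, vecMulVec_mulVec, op_smul_eq_smul, hz, hzz, one_smul, add_smul, one_smul]
  · obtain ⟨ν, hν, hei⟩ := heig i hi
    rw [Function.update_of_ne (ne_of_mem_of_not_mem hi hj)]
    refine ⟨ν, hν, ?_⟩
    rw [add_mulVec, hei, vecMulVec_mulVec, op_smul_eq_smul, hze i hi, zero_smul, add_zero]

theorem add_vecMulVec_of_maximizes_inv (hA : A.PosDef) (h : A.HasOrthonormalEigenvectorsGE c k)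
    (hk : k < Fintype.card n) (hlow : ∀ v, (c - 1) * (v ⬝ᵥ v) ≤ v ⬝ᵥ A *ᵥ v) {z : n → ℝ}
    (hz : z ⬝ᵥ z ≤ 1) (hmax : ∀ w, w ⬝ᵥ w ≤ 1 → w ⬝ᵥ A⁻¹ *ᵥ w ≤ z ⬝ᵥ A⁻¹ *ᵥ z) :
    (A + vecMulVec z z).HasOrthonormalEigenvectorsGE c (k + 1) := by
  have : Nonempty n := Fintype.card_pos_iff.mp (by omega)
  obtain ⟨μ, hzμ, hzz, hμ⟩ := hA.exists_min_eigen_of_maximizes_inv hz hmax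
  by_cases hμc : c ≤ μ
  · refine (hasOrthonormalEigenvectorsGE_card_of_forall_le (hA.add_vecMulVec_self z).isHermitian
      fun v => ?_).mono hk
    rw [dotProduct_mulVec_add_vecMulVec_self]
    have hv : 0 ≤ v ⬝ᵥ v := by simpa using dotProduct_self_star_nonneg v
    nlinarith [hμ v, sq_nonneg (z ⬝ᵥ v)]
  · have := hlow z
    rw [hzμ, dotProduct_smul, hzz, smul_eq_mul, mul_one, mul_one] at this
    exact h.add_vecMulVec_of_eigen hA.isHermitian hzμ hzz (not_le.mp hμc) (by linarith)

end HasOrthonormalEigenvectorsGE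

end Matrix

theorem lamMin_le {d : ℕ} {A : Matrix (Fin d) (Fin d) ℝ} {b : ℝ}
    (hb : ∀ v, b * (v ⬝ᵥ v) ≤ v ⬝ᵥ A *ᵥ v) {v : Fin d → ℝ} (hv : v ⬝ᵥ v = 1) :
    lamMin A ≤ v ⬝ᵥ A *ᵥ v :=
  csInf_le ⟨b, by rintro r ⟨w, hw, rfl⟩; simpa [hw] using hb w⟩ ⟨v, hv, rfl⟩

theorem le_lamMin {d : ℕ} (hd : 0 < d) {A : Matrix (Fin d) (Fin d) ℝ} {c : ℝ}
    (hc : ∀ v, c * (v ⬝ᵥ v) ≤ v ⬝ᵥ A *ᵥ v) : c ≤ lamMin A :=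
  le_csInf ⟨_, Pi.single ⟨0, hd⟩ 1, by simp, rfl⟩ (by rintro r ⟨w, hw, rfl⟩; simpa [hw] using hc w)

theorem stmt2_general {d : ℕ} (hd : 0 < d)
    (M : Matrix (Fin d) (Fin d) ℝ) (hM : M.PosDef)
    (lam : Fin d → ℝ) (q : Fin d → (Fin d → ℝ))
    (hmono : Monotone lam)
    (heig : ∀ i, M.mulVec (q i) = lam i • q i)
    (horth : ∀ i j, q i ⬝ᵥ q j = if i = j then (1 : ℝ) else 0)
    (s : ℕ) (hsd : s < d)
    (hgap : lam ⟨s, hsd⟩ ≥ lam ⟨0, hd⟩ + 1)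
    (Mseq : ℕ → Matrix (Fin d) (Fin d) ℝ)
    (z : ℕ → Fin d → ℝ)
    (hM0 : Mseq 0 = M)
    (hrec : ∀ t, Mseq (t + 1) = Mseq t + vecMulVec (z (t + 1)) (z (t + 1)))
    (hz_ball : ∀ t, Real.sqrt (z (t + 1) ⬝ᵥ z (t + 1)) ≤ 1)
    (hz_max : ∀ t, ∀ w : Fin d → ℝ, Real.sqrt (w ⬝ᵥ w) ≤ 1 →
      w ⬝ᵥ (Mseq t)⁻¹.mulVec w ≤ z (t + 1) ⬝ᵥ (Mseq t)⁻¹.mulVec (z (t + 1))) :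
    lamMin (Mseq s) ≥ lamMin M + 1 := by
  set c := lam ⟨0, hd⟩ + 1
  have hMlow : ∀ v, (c - 1) * (v ⬝ᵥ v) ≤ v ⬝ᵥ M *ᵥ v := by
    rw [add_sub_cancel_right]
    exact mul_dotProduct_self_le_of_orthonormal_eigen heig horth fun i => hmono (Nat.zero_le i.1)
  have hpos : ∀ t, (Mseq t).PosDef := fun t => by
    induction t with
    | zero => rwa [hM0]
    | succ t ih => rw [hrec]; exact ih.add_vecMulVec_self _
  have hlow : ∀ t v, (c - 1) * (v ⬝ᵥ v) ≤ v ⬝ᵥ Mseq t *ᵥ v := fun t v =>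
    (hMlow v).trans (hM0 ▸ dotProduct_mulVec_monotone_of_add_vecMulVec hrec v (Nat.zero_le t))
  have hgreedy : ∀ t ≤ s, (Mseq t).HasOrthonormalEigenvectorsGE c (d - s + t) := fun t ht => by
    induction t with
    | zero => rw [hM0]; exact hasOrthonormalEigenvectorsGE_of_monotone hmono heig horth hgap
    | succ t ih =>
      rw [hrec]
      exact (ih (by omega)).add_vecMulVec_of_maximizes_inv (hpos t)
        (by rw [Fintype.card_fin]; omega) (hlow t) (Real.sqrt_le_one.mp (hz_ball t))
        fun w hw => hz_max t w (Real.sqrt_le_one.mpr hw)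
  have hfinal : (Mseq s).HasOrthonormalEigenvectorsGE c (Fintype.card (Fin d)) := by
    simpa [Nat.sub_add_cancel hsd.le] using hgreedy s le_rfl
  have hq0 : q ⟨0, hd⟩ ⬝ᵥ q ⟨0, hd⟩ = 1 := by simpa using horth ⟨0, hd⟩ ⟨0, hd⟩
  calc lamMin M + 1 ≤ q ⟨0, hd⟩ ⬝ᵥ M *ᵥ q ⟨0, hd⟩ + 1 := by gcongr; exact lamMin_le hMlow hq0
    _ = c := by rw [heig, dotProduct_smul, hq0, smul_eq_mul, mul_one]
    _ ≤ lamMin (Mseq s) := le_lamMin hd hfinal.mul_dotProduct_self_le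

/-- Multi-step greedy update.  `M` is symmetric positive definite with
sorted eigenvalues `lam` (0-indexed: `lam ⟨0,_⟩ = λ₁`) and orthonormal eigenvectors
`q`.  If for some `s ∈ {1,…,d−1}` we have `λ_{s+1}(M) ≥ λ₁(M) + 1`, then after `s`
greedy rank-one updates — each adding `zₜzₜᵀ` where `zₜ` maximizes
`z ↦ zᵀ(M⁽ᵗ⁻¹⁾)⁻¹z` over the unit ball — the smallest eigenvalue satisfies
`λ_min(M⁽ˢ⁾) ≥ λ_min(M) + 1`. -/
theorem stmt2 {d : ℕ} (hd : 0 < d)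
    (M : Matrix (Fin d) (Fin d) ℝ) (hM : M.PosDef)
    (lam : Fin d → ℝ) (q : Fin d → (Fin d → ℝ))
    (hmono : Monotone lam)
    (heig : ∀ i, M.mulVec (q i) = lam i • q i)
    (horth : ∀ i j, q i ⬝ᵥ q j = if i = j then (1 : ℝ) else 0)
    (s : ℕ) (hs1 : 1 ≤ s) (hsd : s < d)
    (hgap : lam ⟨s, hsd⟩ ≥ lam ⟨0, hd⟩ + 1)
    (Mseq : ℕ → Matrix (Fin d) (Fin d) ℝ)
    (z : ℕ → Fin d → ℝ)
    (hM0 : Mseq 0 = M)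
    (hrec : ∀ t, Mseq (t + 1) = Mseq t + vecMulVec (z (t + 1)) (z (t + 1)))
    (hz_ball : ∀ t, Real.sqrt (z (t + 1) ⬝ᵥ z (t + 1)) ≤ 1)
    (hz_max : ∀ t, ∀ w : Fin d → ℝ, Real.sqrt (w ⬝ᵥ w) ≤ 1 →
      w ⬝ᵥ (Mseq t)⁻¹.mulVec w ≤ z (t + 1) ⬝ᵥ (Mseq t)⁻¹.mulVec (z (t + 1))) :
    lamMin (Mseq s) ≥ lamMin M + 1 :=
  stmt2_general hd M hM lam q hmono heig horth s hsd hgap Mseq z hM0 hrec hz_ball hz_max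
end

section
/- Let M = (λ/κ) I + Σ_{i=1}^{n} zᵢ zᵢᵀ where λ, κ > 0 and zᵢ ∈ ℝ^d. Then Σ_{i=1}^{n} ‖zᵢ‖_{M⁻¹} ≤ √(d·n). -/
open Matrix Finset

lemma quadform_vecMulVec' {d : ℕ} (v x : Fin d → ℝ) :
    x ⬝ᵥ (vecMulVec v v) *ᵥ x = (v ⬝ᵥ x) ^ 2 := by
  simp only [dotProduct, mulVec, vecMulVec_apply, sq, Finset.sum_mul, Finset.mul_sum]
  rw [Finset.sum_comm]
  exact Finset.sum_congr rfl fun i _ => Finset.sum_congr rfl fun j _ => by ring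

lemma trace_mul_vecMulVec' {d : ℕ} (A : Matrix (Fin d) (Fin d) ℝ) (v : Fin d → ℝ) :
    (A * vecMulVec v v).trace = v ⬝ᵥ A *ᵥ v := by
  simp only [Matrix.trace, Matrix.diag, mul_apply, vecMulVec_apply, dotProduct, mulVec,
    Finset.mul_sum]
  exact Finset.sum_congr rfl fun i _ => Finset.sum_congr rfl fun j _ => by ring

lemma vecMulVec_isHermitian' {d : ℕ} (v : Fin d → ℝ) :
    (vecMulVec v v).IsHermitian := by
  unfold Matrix.IsHermitian
  ext i j
  simp [vecMulVec_apply, mul_comm]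

lemma dotProduct_sum' {d n : ℕ} (x : Fin d → ℝ) (w : Fin n → Fin d → ℝ) :
    x ⬝ᵥ (∑ i, w i) = ∑ i, x ⬝ᵥ w i := by
  simp only [dotProduct, Finset.sum_apply, Finset.mul_sum]
  rw [Finset.sum_comm]

lemma sum_mulVec' {d n : ℕ} (A : Fin n → Matrix (Fin d) (Fin d) ℝ) (x : Fin d → ℝ) :
    (∑ i, A i) *ᵥ x = ∑ i, (A i) *ᵥ x := by
  ext j
  simp only [mulVec, dotProduct, Matrix.sum_apply, Finset.sum_apply, Finset.sum_mul]
  rw [Finset.sum_comm]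

/-- For `M = (λ/κ)I + Σ_{i=1}^n zᵢzᵢᵀ` with `λ, κ > 0`,
`Σᵢ ‖zᵢ‖_{M⁻¹} ≤ √(d·n)`. -/
theorem stmt6 {d n : ℕ} (lam κ : ℝ) (hlam : 0 < lam) (hκ : 0 < κ)
    (z : Fin n → Fin d → ℝ)
    (M : Matrix (Fin d) (Fin d) ℝ)
    (hM : M = (lam / κ) • (1 : Matrix (Fin d) (Fin d) ℝ)
        + ∑ i, vecMulVec (z i) (z i)) :
    ∑ i, Real.sqrt (z i ⬝ᵥ M⁻¹.mulVec (z i)) ≤ Real.sqrt ((d : ℝ) * n) := by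
  set c : ℝ := lam / κ with hc
  have hcpos : 0 < c := div_pos hlam hκ
  have hherm : M.IsHermitian := by
    rw [hM]
    refine Matrix.IsHermitian.add ?_ ?_
    · unfold Matrix.IsHermitian
      ext i j
      simp [Matrix.one_apply, eq_comm]
    · exact Finset.sum_induction _ _ (fun a b ha hb => ha.add hb) isHermitian_zero
        (fun i _ => vecMulVec_isHermitian' (z i))
  have hquad : ∀ x : Fin d → ℝ, x ⬝ᵥ M *ᵥ x = c * (x ⬝ᵥ x) + ∑ i, (z i ⬝ᵥ x) ^ 2 := by
    intro x
    rw [hM]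
    simp only [add_mulVec, dotProduct_add, smul_mulVec, one_mulVec, dotProduct_smul,
      smul_eq_mul]
    congr 1
    rw [sum_mulVec', dotProduct_sum']
    exact Finset.sum_congr rfl fun i _ => quadform_vecMulVec' (z i) x
  have hpd : M.PosDef := by
    refine PosDef.of_dotProduct_mulVec_pos hherm fun x hx => ?_
    simp only [star_trivial, RCLike.re_to_real]
    rw [hquad]
    have h1 : 0 < c * (x ⬝ᵥ x) := by
      refine mul_pos hcpos ?_
      have := (dotProduct_self_star_pos_iff (v := x)).mpr hx
      simpa using this
    have h2 : 0 ≤ ∑ i, (z i ⬝ᵥ x) ^ 2 := Finset.sum_nonneg fun i _ => sq_nonneg _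
    linarith
  have hinv : M⁻¹.PosDef := hpd.inv
  -- each quadratic form is nonneg
  have ha : ∀ i, 0 ≤ z i ⬝ᵥ M⁻¹ *ᵥ z i := by
    intro i
    have := hinv.posSemidef.dotProduct_mulVec_nonneg (z i)
    simpa using this
  -- trace identity
  have hMinvM : M⁻¹ * M = 1 := Matrix.nonsing_inv_mul M hpd.det_pos.ne'.isUnit
  have htr2 : 0 ≤ M⁻¹.trace := by
    rw [Matrix.trace]
    refine Finset.sum_nonneg fun k _ => ?_
    have := hinv.posSemidef.dotProduct_mulVec_nonneg (Pi.single k 1)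
    simpa [dotProduct, mulVec, Pi.single_apply, Matrix.diag] using this
  have hsum : ∑ i, z i ⬝ᵥ M⁻¹ *ᵥ z i ≤ (d : ℝ) := by
    have key : ∑ i, z i ⬝ᵥ M⁻¹ *ᵥ z i = (M⁻¹ * (∑ i, vecMulVec (z i) (z i))).trace := by
      rw [Finset.mul_sum, Matrix.trace_sum]
      exact (Finset.sum_congr rfl fun i _ => (trace_mul_vecMulVec' M⁻¹ (z i)).symm)
    have hS : (∑ i, vecMulVec (z i) (z i)) = M - c • 1 := by
      rw [hM]; abel
    rw [key, hS, Matrix.mul_sub, Matrix.trace_sub, hMinvM, Matrix.trace_one]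
    have : (M⁻¹ * (c • 1)).trace = c * M⁻¹.trace := by
      rw [Matrix.mul_smul, Matrix.mul_one, Matrix.trace_smul, smul_eq_mul]
    rw [this]
    have : 0 ≤ c * M⁻¹.trace := mul_nonneg hcpos.le htr2
    simp only [Finset.card_univ, Fintype.card_fin]
    linarith
  -- Cauchy-Schwarz
  have hnn : 0 ≤ ∑ i, Real.sqrt (z i ⬝ᵥ M⁻¹ *ᵥ z i) :=
    Finset.sum_nonneg fun i _ => Real.sqrt_nonneg _
  refine (Real.le_sqrt hnn (by positivity)).mpr ?_
  calc (∑ i, Real.sqrt (z i ⬝ᵥ M⁻¹ *ᵥ z i)) ^ 2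
      ≤ (Finset.univ.card : ℝ) * ∑ i, (Real.sqrt (z i ⬝ᵥ M⁻¹ *ᵥ z i)) ^ 2 := by
        exact sq_sum_le_card_mul_sum_sq
    _ = (n : ℝ) * ∑ i, z i ⬝ᵥ M⁻¹ *ᵥ z i := by
        rw [Finset.card_univ, Fintype.card_fin]
        congr 1
        exact Finset.sum_congr rfl fun i _ => Real.sq_sqrt (ha i)
    _ ≤ (n : ℝ) * d := by
        exact mul_le_mul_of_nonneg_left hsum (Nat.cast_nonneg n)
    _ = (d : ℝ) * n := by ring
end

section
/- (Suboptimality decomposition for pessimistic policies.) Let Θ ⊆ ℝ^d, θ ∈ Θ, and for each policy π let f(π) ∈ ℝ^d be a feature vector (already shifted by a reference vector w). Let M be positive definite, β ≥ 0, θ̃ ∈ ℝ^d with ‖θ − θ̃‖_M ≤ β + B for some B ≥ 0, and define the pessimistic value J̃(π) = f(π)ᵀ θ̃ − β‖f(π)‖_{M⁻¹}. Let π̂ = argmax_π J̃(π) and π* = argmax_π f(π)ᵀθ. Then f(π*)ᵀθ − f(π̂)ᵀθ ≤ (2β + B)‖f(π*)‖_{M⁻¹} + B‖f(π̂)‖_{M⁻¹}.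 -/
open Matrix

/-- Symmetry of the quadratic form for a symmetric matrix. -/
lemma aux_symm {d : ℕ} {M : Matrix (Fin d) (Fin d) ℝ} (hM : M.IsHermitian)
    (u v : Fin d → ℝ) : u ⬝ᵥ M.mulVec v = v ⬝ᵥ M.mulVec u := by
  have hMt : Mᵀ = M := by simpa using (congrArg Matrix.conjTranspose hM.eq).symm
  rw [dotProduct_mulVec, ← Matrix.mulVec_transpose, hMt]
  exact dotProduct_comm _ _

/-- Cauchy–Schwarz for the quadratic form of a positive semidefinite symmetric matrix. -/
lemma aux_cs {d : ℕ} {M : Matrix (Fin d) (Fin d) ℝ} (hM : M.PosSemidef)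
    (u v : Fin d → ℝ) :
    u ⬝ᵥ M.mulVec v ≤
      Real.sqrt (u ⬝ᵥ M.mulVec u) * Real.sqrt (v ⬝ᵥ M.mulVec v) := by
  have hsq : (u ⬝ᵥ M.mulVec v) ^ 2 ≤ (u ⬝ᵥ M.mulVec u) * (v ⬝ᵥ M.mulVec v) := by
    have hkey : ∀ t : ℝ, 0 ≤ (v ⬝ᵥ M.mulVec v) * t ^ 2
        + (2 * (u ⬝ᵥ M.mulVec v)) * t + (u ⬝ᵥ M.mulVec u) := by
      intro t
      have h0 : 0 ≤ (u + t • v) ⬝ᵥ M.mulVec (u + t • v) := by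
        have := hM.dotProduct_mulVec_nonneg (u + t • v)
        simpa using this
      have hexp : (u + t • v) ⬝ᵥ M.mulVec (u + t • v)
          = (v ⬝ᵥ M.mulVec v) * t ^ 2 + (2 * (u ⬝ᵥ M.mulVec v)) * t
            + (u ⬝ᵥ M.mulVec u) := by
        have hsymm := aux_symm hM.isHermitian u v
        simp only [Matrix.mulVec_add, Matrix.mulVec_smul, dotProduct_add,
          add_dotProduct, smul_dotProduct, dotProduct_smul, smul_eq_mul]
        rw [show v ⬝ᵥ M.mulVec u = u ⬝ᵥ M.mulVec v from (aux_symm hM.isHermitian v u)]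
        ring
      rw [hexp] at h0
      exact h0
    by_cases hv : v ⬝ᵥ M.mulVec v = 0
    · -- then u ⬝ᵥ M v = 0 (else linear function would go negative)
      have huv : u ⬝ᵥ M.mulVec v = 0 := by
        by_contra h
        rcases lt_or_gt_of_ne h with h' | h'
        · have := hkey ((-(u ⬝ᵥ M.mulVec u) - 1) / (2 * (u ⬝ᵥ M.mulVec v)))
          rw [hv] at this
          field_simp at this
          rw [le_div_iff₀ (lt_of_le_of_ne (sq_nonneg _) (Ne.symm (pow_ne_zero 2 h)))] at this
          nlinarith
        · have := hkey ((-(u ⬝ᵥ M.mulVec u) - 1) / (2 * (u ⬝ᵥ M.mulVec v)))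
          rw [hv] at this
          field_simp at this
          nlinarith
      rw [huv, hv]; nlinarith [hM.dotProduct_mulVec_nonneg u, hM.dotProduct_mulVec_nonneg u]
    · have hvpos : 0 < v ⬝ᵥ M.mulVec v := lt_of_le_of_ne (by simpa using hM.dotProduct_mulVec_nonneg v) (Ne.symm hv)
      have := hkey (-(u ⬝ᵥ M.mulVec v) / (v ⬝ᵥ M.mulVec v))
      have h2 : (v ⬝ᵥ M.mulVec v) * (-(u ⬝ᵥ M.mulVec v) / (v ⬝ᵥ M.mulVec v)) ^ 2
          + (2 * (u ⬝ᵥ M.mulVec v)) * (-(u ⬝ᵥ M.mulVec v) / (v ⬝ᵥ M.mulVec v))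
          + (u ⬝ᵥ M.mulVec u)
          = (u ⬝ᵥ M.mulVec u) - (u ⬝ᵥ M.mulVec v) ^ 2 / (v ⬝ᵥ M.mulVec v) := by
        field_simp; ring
      rw [h2, sub_nonneg, div_le_iff₀ hvpos] at this
      linarith [this]
  calc u ⬝ᵥ M.mulVec v ≤ |u ⬝ᵥ M.mulVec v| := le_abs_self _
    _ = Real.sqrt ((u ⬝ᵥ M.mulVec v) ^ 2) := (Real.sqrt_sq_eq_abs _).symm
    _ ≤ Real.sqrt ((u ⬝ᵥ M.mulVec u) * (v ⬝ᵥ M.mulVec v)) := Real.sqrt_le_sqrt hsq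
    _ = _ := Real.sqrt_mul (by simpa using hM.dotProduct_mulVec_nonneg u) _

/-- Mixed Cauchy–Schwarz: `a ⬝ᵥ w ≤ ‖a‖_{M⁻¹} ‖w‖_M` for positive definite `M`. -/
lemma aux_cs_mixed {d : ℕ} {M : Matrix (Fin d) (Fin d) ℝ} (hM : M.PosDef)
    (a w : Fin d → ℝ) :
    a ⬝ᵥ w ≤ Real.sqrt (a ⬝ᵥ M⁻¹.mulVec a) * Real.sqrt (w ⬝ᵥ M.mulVec w) := by
  have hdet : IsUnit M.det := hM.det_pos.ne'.isUnit
  have hMt : Mᵀ = M := by simpa using (congrArg Matrix.conjTranspose hM.isHermitian.eq).symm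
  have hMinv : M⁻¹ᵀ = M⁻¹ := by rw [Matrix.transpose_nonsing_inv, hMt]
  set u := M⁻¹.mulVec a with hu
  have h1 : u ⬝ᵥ M.mulVec w = a ⬝ᵥ w := by
    rw [hu, dotProduct_mulVec, ← Matrix.mulVec_transpose, hMt,
      Matrix.mulVec_mulVec, Matrix.mul_nonsing_inv M hdet]
    simp
  have h2 : u ⬝ᵥ M.mulVec u = a ⬝ᵥ M⁻¹.mulVec a := by
    rw [hu]
    rw [show M.mulVec (M⁻¹.mulVec a) = (M * M⁻¹).mulVec a from
      Matrix.mulVec_mulVec a M M⁻¹, Matrix.mul_nonsing_inv M hdet,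
      Matrix.one_mulVec, dotProduct_mulVec, ← Matrix.mulVec_transpose, hMinv]
  have := aux_cs hM.posSemidef u w
  rw [h1, h2] at this
  exact this

/-- Suboptimality decomposition for pessimistic policies.  Let
`f(π)` be the (reference-shifted) feature of policy `π`, `M` positive definite,
`β, B ≥ 0`, and `‖θ − θ̃‖_M ≤ β + B`.  Let `J̃(π) = f(π)ᵀθ̃ − β‖f(π)‖_{M⁻¹}`,
`π̂` a maximizer of `J̃`, and `π*` a maximizer of `f(π)ᵀθ`.  Then
`f(π*)ᵀθ − f(π̂)ᵀθ ≤ (2β + B)‖f(π*)‖_{M⁻¹} + B‖f(π̂)‖_{M⁻¹}`. -/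
theorem stmt16 {d : ℕ} {P : Type*}
    (Θ : Set (Fin d → ℝ)) (θ : Fin d → ℝ) (hθ : θ ∈ Θ)
    (f : P → Fin d → ℝ)
    (M : Matrix (Fin d) (Fin d) ℝ) (hM : M.PosDef)
    (β B : ℝ) (hβ : 0 ≤ β) (hB : 0 ≤ B)
    (θt : Fin d → ℝ)
    (hclose : Real.sqrt ((θ - θt) ⬝ᵥ M.mulVec (θ - θt)) ≤ β + B)
    (Jt : P → ℝ)
    (hJt : ∀ π, Jt π = f π ⬝ᵥ θt - β * Real.sqrt (f π ⬝ᵥ M⁻¹.mulVec (f π)))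
    (πhat πstar : P)
    (hhat : ∀ π, Jt π ≤ Jt πhat)
    (hstar : ∀ π, f π ⬝ᵥ θ ≤ f πstar ⬝ᵥ θ) :
    f πstar ⬝ᵥ θ - f πhat ⬝ᵥ θ ≤
      (2 * β + B) * Real.sqrt (f πstar ⬝ᵥ M⁻¹.mulVec (f πstar))
        + B * Real.sqrt (f πhat ⬝ᵥ M⁻¹.mulVec (f πhat)) := by
  set s := Real.sqrt ((θ - θt) ⬝ᵥ M.mulVec (θ - θt)) with hs
  set ns := Real.sqrt (f πstar ⬝ᵥ M⁻¹.mulVec (f πstar)) with hns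
  set nh := Real.sqrt (f πhat ⬝ᵥ M⁻¹.mulVec (f πhat)) with hnh
  have hns0 : 0 ≤ ns := Real.sqrt_nonneg _
  have hnh0 : 0 ≤ nh := Real.sqrt_nonneg _
  -- first term
  have hcs1 : f πstar ⬝ᵥ (θ - θt) ≤ ns * s := aux_cs_mixed hM _ _
  have hcs2 : f πhat ⬝ᵥ (θt - θ) ≤ nh * s := by
    have := aux_cs_mixed hM (f πhat) (θt - θ)
    have heq : (θt - θ) ⬝ᵥ M.mulVec (θt - θ) = (θ - θt) ⬝ᵥ M.mulVec (θ - θt) := by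
      rw [show θt - θ = -(θ - θt) from by abel, Matrix.mulVec_neg, dotProduct_neg,
        neg_dotProduct, neg_neg]
    rwa [heq, ← hs, ← hnh] at this
  have hmid := hhat πstar
  rw [hJt πstar, hJt πhat, ← hns, ← hnh] at hmid
  have e1 : f πstar ⬝ᵥ (θ - θt) = f πstar ⬝ᵥ θ - f πstar ⬝ᵥ θt := by
    simp [dotProduct_sub]
  have e2 : f πhat ⬝ᵥ (θt - θ) = f πhat ⬝ᵥ θt - f πhat ⬝ᵥ θ := by
    simp [dotProduct_sub]
  rw [e1] at hcs1
  rw [e2] at hcs2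
  nlinarith [mul_le_mul_of_nonneg_left hclose hns0,
    mul_le_mul_of_nonneg_left hclose hnh0]
end
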